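/- arXiv:2502.20328 — 7 statements merged into one kernel-verified Lean document; each statement's English description precedes it below -/
import Mathlib

section
/- For every E ∈ ℝ with E ≠ 0, the limit lim_{ε→0⁺} ∫_ℝ e^{−i E s}/(s − i ε)² ds exists and equals 2πE when E < 0 and equals 0 when E > 0. Consequently lim_{ε→0⁺} ∫_ℝ e^{−i E s}·(−1/(4π²(s − i ε)²)) ds = −(E/(2π))·Θ(−E), where Θ is the Heaviside function. -/
open MeasureTheory Real Filter Set
open scoped FourierTransform Topology

/-! For `ε > 0`, `∫₀^∞ t e^{-at} dt = 1/a²` (`Re a > 0`) shows that, after the rescaling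
`s = 2πw`, `s ↦ -1/(s - iε)²` is the Fourier transform of the continuous one-sided function
`g(t) = t e^{-εt} 1_{t>0}`. Both `g` and its transform are integrable, so Fourier inversion
evaluates the integral exactly as `-2π g(-E)`, i.e. `2πE e^{εE}` for `E < 0` and `0` otherwise,
and the limit `ε → 0⁺` is immediate. -/

theorem norm_ofReal_mul_cexp_neg_mul {a : ℂ} {t : ℝ} (ht : 0 ≤ t) :
    ‖(t : ℂ) * Complex.exp (-(a * t))‖ = t * Real.exp (-a.re * t) := by
  simp [Complex.norm_exp, abs_of_nonneg ht]

theorem integrableOn_Ioi_mul_cexp_neg_mul {a : ℂ} (ha : 0 < a.re) :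
    IntegrableOn (fun t : ℝ => (t : ℂ) * Complex.exp (-(a * t))) (Ioi 0) := by
  have hbound : IntegrableOn (fun t : ℝ => t * Real.exp (-a.re * t)) (Ioi 0) := by
    simpa using integrableOn_rpow_mul_exp_neg_mul_rpow (s := 1) (p := 1) (by norm_num) one_pos ha
  refine hbound.mono' (by fun_prop) ?_
  filter_upwards [ae_restrict_mem measurableSet_Ioi] with t ht
  rw [norm_ofReal_mul_cexp_neg_mul (le_of_lt ht)]

theorem tendsto_mul_cexp_neg_mul_atTop {a : ℂ} (ha : 0 < a.re) :
    Tendsto (fun t : ℝ => (t : ℂ) * Complex.exp (-(a * t))) atTop (𝓝 0) := by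
  rw [tendsto_zero_iff_norm_tendsto_zero]
  have hbound : Tendsto (fun t : ℝ => t * Real.exp (-a.re * t)) atTop (𝓝 0) := by
    simpa using tendsto_rpow_mul_exp_neg_mul_atTop_nhds_zero 1 a.re ha
  refine hbound.congr' ?_
  filter_upwards [eventually_ge_atTop 0] with t ht
  rw [norm_ofReal_mul_cexp_neg_mul ht]

theorem tendsto_cexp_neg_mul_atTop {a : ℂ} (ha : 0 < a.re) :
    Tendsto (fun t : ℝ => Complex.exp (-(a * t))) atTop (𝓝 0) := by
  simpa [Complex.tendsto_exp_nhds_zero_iff] using tendsto_id.const_mul_atTop ha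

theorem integral_Ioi_mul_cexp_neg_mul {a : ℂ} (ha : 0 < a.re) :
    ∫ t in Ioi (0 : ℝ), (t : ℂ) * Complex.exp (-(a * t)) = (a ^ 2)⁻¹ := by
  have ha0 : a ≠ 0 := fun h => by simp [h] at ha
  set F : ℝ → ℂ := fun t =>
    -(a⁻¹ * (t * Complex.exp (-(a * t))) + (a ^ 2)⁻¹ * Complex.exp (-(a * t)))
  have hF : ∀ t : ℝ, HasDerivAt F ((t : ℂ) * Complex.exp (-(a * t))) t := by
    intro t
    have hid : HasDerivAt (fun t : ℝ => (t : ℂ)) 1 t := (hasDerivAt_id t).ofReal_comp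
    have hexp : HasDerivAt (fun t : ℝ => Complex.exp (-(a * t))) (-a * Complex.exp (-(a * t))) t :=
      by simpa [mul_comm] using (hid.const_mul a).neg.cexp
    refine ((hid.mul hexp).const_mul a⁻¹ |>.add (hexp.const_mul (a ^ 2)⁻¹)).neg.congr_deriv ?_
    field_simp
    ring
  have hlim : Tendsto F atTop (𝓝 0) := by
    simpa [F] using (((tendsto_mul_cexp_neg_mul_atTop ha).const_mul a⁻¹).add
      ((tendsto_cexp_neg_mul_atTop ha).const_mul (a ^ 2)⁻¹)).neg
  rw [integral_Ioi_of_hasDerivAt_of_tendsto' (fun t _ => hF t)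
    (integrableOn_Ioi_mul_cexp_neg_mul ha) hlim]
  simp [F]

theorem continuous_indicator_Ioi_mul_cexp_neg_mul (a : ℂ) :
    Continuous ((Ioi 0).indicator fun t : ℝ => (t : ℂ) * Complex.exp (-(a * t))) := by
  have h : ((Ioi 0).indicator fun t : ℝ => (t : ℂ) * Complex.exp (-(a * t))) =
      fun t => ((max t 0 : ℝ) : ℂ) * Complex.exp (-(a * (max t 0 : ℝ))) := by
    funext t
    rcases lt_or_ge 0 t with ht | ht
    · simp [ht, ht.le]
    · simp [ht, not_lt.2 ht]
  rw [h]
  fun_prop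

theorem fourier_indicator_Ioi_mul_cexp_neg_mul {a : ℂ} (ha : 0 < a.re) (w : ℝ) :
    𝓕 ((Ioi 0).indicator fun t : ℝ => (t : ℂ) * Complex.exp (-(a * t))) w =
      ((a + 2 * π * w * Complex.I) ^ 2)⁻¹ := by
  have hshift : 0 < (a + 2 * π * w * Complex.I).re := by simpa using ha
  rw [Real.fourier_real_eq_integral_exp_smul, ← integral_Ioi_mul_cexp_neg_mul hshift,
    ← integral_indicator measurableSet_Ioi]
  congr 1 with v
  by_cases hv : v ∈ Ioi 0
  · simp only [indicator_of_mem hv, smul_eq_mul]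
    rw [mul_left_comm, ← Complex.exp_add]
    congr 2
    push_cast
    ring
  · simp [indicator_of_notMem hv]

theorem integrable_inv_ofReal_sub_I_mul_sq {ε : ℝ} (hε : ε ≠ 0) :
    Integrable fun s : ℝ => (((s : ℂ) - Complex.I * ε) ^ 2)⁻¹ := by
  have hbound : Integrable fun s : ℝ => (ε ^ 2)⁻¹ * (1 + (s / ε) ^ 2)⁻¹ :=
    (integrable_inv_one_add_sq.comp_div hε).const_mul _
  refine hbound.mono' (by fun_prop) (.of_forall fun s => le_of_eq ?_)
  have hnorm : ‖(s : ℂ) - Complex.I * ε‖ ^ 2 = s ^ 2 + ε ^ 2 := by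
    rw [Complex.sq_norm, Complex.normSq_apply]
    simp
    ring
  rw [norm_inv, norm_pow, hnorm]
  field_simp
  ring

theorem integral_cexp_mul_fourier_comp_div_two_pi {g : ℝ → ℂ} (hg : Continuous g)
    (hgi : Integrable g) (hFg : Integrable (𝓕 g)) (E : ℝ) :
    ∫ s : ℝ, Complex.exp (-(Complex.I * E * s)) * 𝓕 g (s / (2 * π)) = 2 * π * g (-E) := by
  have hinv : 𝓕 (𝓕 g) E = g (-E) := by
    rw [← neg_neg E, ← Real.fourierInv_eq_fourier_neg, neg_neg]
    exact hgi.fourierInv_fourier_eq hFg hg.continuousAt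
  have hscale := Measure.integral_comp_mul_left
    (fun s : ℝ => Complex.exp (-(Complex.I * E * s)) * 𝓕 g (s / (2 * π))) (2 * π)
  have hFF : ∫ w : ℝ, Complex.exp (-(Complex.I * E * (2 * π * w : ℝ))) *
      𝓕 g (2 * π * w / (2 * π)) = 𝓕 (𝓕 g) E := by
    rw [Real.fourier_real_eq_integral_exp_smul]
    congr 1 with w
    rw [mul_div_cancel_left₀ w (by positivity), smul_eq_mul]
    congr 2
    push_cast
    ring
  rw [hFF, hinv, abs_of_pos (by positivity), Complex.real_smul] at hscale
  rw [hscale]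
  push_cast
  field_simp

theorem integral_cexp_div_ofReal_sub_I_mul_sq {ε : ℝ} (hε : 0 < ε) (E : ℝ) :
    ∫ s : ℝ, Complex.exp (-(Complex.I * E * s)) / ((s : ℂ) - Complex.I * ε) ^ 2 =
      if E < 0 then ((2 * π * E : ℝ) : ℂ) * Complex.exp (ε * E) else 0 := by
  set g := (Ioi 0).indicator fun t : ℝ => (t : ℂ) * Complex.exp (-(ε * t)) with hg
  have hre : 0 < (ε : ℂ).re := by simpa
  have hFg : ∀ s : ℝ, 𝓕 g (s / (2 * π)) = -(((s : ℂ) - Complex.I * ε) ^ 2)⁻¹ := by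
    intro s
    have hrot : (ε : ℂ) + 2 * π * (s / (2 * π) : ℝ) * Complex.I =
        Complex.I * ((s : ℂ) - Complex.I * ε) := by
      push_cast
      field_simp
      linear_combination (ε : ℂ) * Complex.I_sq
    rw [fourier_indicator_Ioi_mul_cexp_neg_mul hre, hrot, mul_pow, Complex.I_sq, neg_one_mul,
      inv_neg]
  have hgi : Integrable g :=
    (integrable_indicator_iff measurableSet_Ioi).2 (integrableOn_Ioi_mul_cexp_neg_mul hre)
  have hFgi : Integrable (𝓕 g) := by
    refine ((integrable_inv_ofReal_sub_I_mul_sq hε.ne').neg.comp_mul_left'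
      (by positivity : 2 * π ≠ 0)).congr (.of_forall fun w => ?_)
    conv_rhs => rw [← mul_div_cancel_left₀ w (by positivity : 2 * π ≠ 0), hFg]
    simp
  calc ∫ s : ℝ, Complex.exp (-(Complex.I * E * s)) / ((s : ℂ) - Complex.I * ε) ^ 2
      = -∫ s : ℝ, Complex.exp (-(Complex.I * E * s)) * 𝓕 g (s / (2 * π)) := by
        rw [← integral_neg]
        simp_rw [hFg, mul_neg, neg_neg, div_eq_mul_inv]
    _ = -(2 * π * g (-E)) := by
        rw [integral_cexp_mul_fourier_comp_div_two_pi
          (continuous_indicator_Ioi_mul_cexp_neg_mul _) hgi hFgi]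
    _ = _ := by
        split_ifs with hE
        · simp only [hg, indicator_of_mem (s := Ioi 0) (neg_pos.2 hE), Complex.ofReal_neg,
            Complex.ofReal_mul, Complex.ofReal_ofNat, mul_neg, neg_mul, neg_neg]
          ring_nf
        · simp [hg, hE]

theorem tendsto_integral_cexp_div_ofReal_sub_I_mul_sq (E : ℝ) :
    Tendsto (fun ε : ℝ =>
        ∫ s : ℝ, Complex.exp (-(Complex.I * E * s)) / ((s : ℂ) - Complex.I * ε) ^ 2)
      (𝓝[>] 0) (𝓝 (if E < 0 then ((2 * π * E : ℝ) : ℂ) else 0)) := by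
  refine Tendsto.congr' (eventuallyEq_nhdsWithin_of_eqOn fun ε hε =>
    (integral_cexp_div_ofReal_sub_I_mul_sq hε E).symm) ?_
  split_ifs
  · exact tendsto_nhdsWithin_of_tendsto_nhds
      ((continuous_const.mul (by fun_prop)).tendsto' 0 _ (by simp))
  · exact tendsto_const_nhds

theorem stmt5_general (E : ℝ) :
    Tendsto (fun ε : ℝ =>
        ∫ s : ℝ, Complex.exp (-(Complex.I * E * s)) / ((s : ℂ) - Complex.I * ε) ^ 2)
      (nhdsWithin 0 (Set.Ioi 0))
      (nhds (if E < 0 then ((2 * π * E : ℝ) : ℂ) else 0)) ∧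
    Tendsto (fun ε : ℝ =>
        ∫ s : ℝ, Complex.exp (-(Complex.I * E * s)) *
          (-1 / (4 * (π : ℂ) ^ 2 * ((s : ℂ) - Complex.I * ε) ^ 2)))
      (nhdsWithin 0 (Set.Ioi 0))
      (nhds ((-(E / (2 * π)) * (if E < 0 then 1 else 0) : ℝ) : ℂ)) := by
  have hlim := tendsto_integral_cexp_div_ofReal_sub_I_mul_sq E
  refine ⟨hlim, ?_⟩
  have hrescale : ∀ ε : ℝ, ∫ s : ℝ, Complex.exp (-(Complex.I * E * s)) *
      (-1 / (4 * (π : ℂ) ^ 2 * ((s : ℂ) - Complex.I * ε) ^ 2)) = -1 / (4 * (π : ℂ) ^ 2) *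
      ∫ s : ℝ, Complex.exp (-(Complex.I * E * s)) / ((s : ℂ) - Complex.I * ε) ^ 2 := by
    intro ε
    rw [← integral_const_mul]
    congr with s
    simp only [div_eq_mul_inv, mul_inv]
    ring
  simp_rw [hrescale]
  convert hlim.const_mul (-1 / (4 * (π : ℂ) ^ 2)) using 2
  split_ifs
  · push_cast
    field_simp
    ring
  · simp

/-- For `E ≠ 0`, the limit `lim_{ε→0⁺} ∫_ℝ e^{−iEs}/(s − iε)² ds` exists and
equals `2πE` for `E < 0` and `0` for `E > 0`; consequently
`lim_{ε→0⁺} ∫_ℝ e^{−iEs}·(−1/(4π²(s − iε)²)) ds = −(E/(2π))·Θ(−E)`. -/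
theorem stmt5 (E : ℝ) (hE : E ≠ 0) :
    Tendsto (fun ε : ℝ =>
        ∫ s : ℝ, Complex.exp (-(Complex.I * E * s)) / ((s : ℂ) - Complex.I * ε) ^ 2)
      (nhdsWithin 0 (Set.Ioi 0))
      (nhds (if E < 0 then ((2 * π * E : ℝ) : ℂ) else 0)) ∧
    Tendsto (fun ε : ℝ =>
        ∫ s : ℝ, Complex.exp (-(Complex.I * E * s)) *
          (-1 / (4 * (π : ℂ) ^ 2 * ((s : ℂ) - Complex.I * ε) ^ 2)))
      (nhdsWithin 0 (Set.Ioi 0))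
      (nhds ((-(E / (2 * π)) * (if E < 0 then 1 else 0) : ℝ) : ℂ)) :=
  stmt5_general E
end

section
/- Let β_L, β_R > 0 and v ∈ (−1,1) with v ≠ 0. Then lim_{E→0⁺} [R(β_L, −v, E) + R(β_R, v, E)] = (√(1 − v²)/(4π v))·((1/β_R)·ln(1 + v) − (1/β_L)·ln(1 − v)). -/
open MeasureTheory Real Filter Set

/-- The function `R(β, u, E)` appearing in the NESS transition rate. -/
noncomputable def Rfun (β u E : ℝ) : ℝ :=
  (Real.sqrt (1 - u ^ 2) / (4 * π * u * β)) *
    Real.log ((1 - Real.exp (-(β * Real.sqrt (1 - u ^ 2) * E))) /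
      (1 - Real.exp (-(β * Real.sqrt ((1 - u) / (1 + u)) * E))))

/-!
Both numerator and denominator inside the logarithm of `R(β, u, E)` vanish linearly as `E → 0`,
so their quotient tends to the ratio of slopes `√(1 - u²) / √((1 - u)/(1 + u)) = 1 + u`.
Hence `R(β, u, E) → √(1 - u²) / (4π u β) · ln (1 + u)`, and adding the cases `u = -v` and
`u = v` gives the formula.
-/

open scoped Topology

lemma tendsto_one_sub_exp_neg_mul_div (a : ℝ) :
    Tendsto (fun E : ℝ => (1 - exp (-(a * E))) / E) (𝓝[≠] 0) (𝓝 a) := by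
  have hderiv : HasDerivAt (fun E : ℝ => 1 - exp (-(a * E))) a 0 := by
    simpa using (((hasDerivAt_id (0 : ℝ)).const_mul a).fun_neg.exp).const_sub 1
  refine hderiv.tendsto_slope_zero.congr fun E => ?_
  simp [div_eq_inv_mul]

lemma tendsto_one_sub_exp_neg_mul_div_one_sub_exp_neg_mul (a : ℝ) {b : ℝ} (hb : b ≠ 0) :
    Tendsto (fun E : ℝ => (1 - exp (-(a * E))) / (1 - exp (-(b * E)))) (𝓝[≠] 0)
      (𝓝 (a / b)) := by
  refine ((tendsto_one_sub_exp_neg_mul_div a).div (tendsto_one_sub_exp_neg_mul_div b) hb).congr'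
    ?_
  filter_upwards [self_mem_nhdsWithin] with E (hE : E ≠ 0)
  rw [Pi.div_apply, div_div_div_cancel_right₀ hE]

lemma sqrt_one_sub_sq_div_sqrt_one_sub_div_one_add {u : ℝ} (h1 : -1 < u) (h2 : u < 1) :
    √(1 - u ^ 2) / √((1 - u) / (1 + u)) = 1 + u := by
  have hp : 0 < 1 + u := by linarith
  have hm : 0 < 1 - u := by linarith
  rw [show 1 - u ^ 2 = (1 - u) * (1 + u) by ring, sqrt_mul hm.le, sqrt_div hm.le,
    div_div_eq_mul_div, div_eq_iff (sqrt_pos.mpr hm).ne', mul_assoc, mul_self_sqrt hp.le,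
    mul_comm]

lemma tendsto_Rfun {β u : ℝ} (hβ : β ≠ 0) (h1 : -1 < u) (h2 : u < 1) :
    Tendsto (Rfun β u) (𝓝[≠] 0) (𝓝 (√(1 - u ^ 2) / (4 * π * u * β) * log (1 + u))) := by
  have hslope : β * √((1 - u) / (1 + u)) ≠ 0 :=
    mul_ne_zero hβ (sqrt_pos.mpr (div_pos (by linarith) (by linarith))).ne'
  have hratio := tendsto_one_sub_exp_neg_mul_div_one_sub_exp_neg_mul
    (β * √(1 - u ^ 2)) hslope
  rw [mul_div_mul_left _ _ hβ, sqrt_one_sub_sq_div_sqrt_one_sub_div_one_add h1 h2] at hratio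
  exact ((continuousAt_log (by linarith)).tendsto.comp hratio).const_mul _

theorem stmt12_general (βL βR v : ℝ) (hL : 0 < βL) (hR : 0 < βR)
    (hv1 : -1 < v) (hv2 : v < 1) :
    Tendsto (fun E : ℝ => Rfun βL (-v) E + Rfun βR v E)
      (nhdsWithin 0 (Set.Ioi 0))
      (nhds ((Real.sqrt (1 - v ^ 2) / (4 * π * v)) *
        ((1 / βR) * Real.log (1 + v) - (1 / βL) * Real.log (1 - v)))) := by
  have hsum := ((tendsto_Rfun hL.ne' (u := -v) (by linarith) (by linarith)).add
    (tendsto_Rfun hR.ne' hv1 hv2)).mono_left (nhdsGT_le_nhdsNE 0)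
  convert hsum using 2
  rw [neg_sq, ← sub_eq_add_neg]
  ring

/-- Small-energy-gap limit of the NESS transition rate: for
`β_L, β_R > 0` and `v ∈ (−1,1)`, `v ≠ 0`,
`lim_{E→0⁺} [R(β_L, −v, E) + R(β_R, v, E)]
  = (√(1−v²)/(4πv))·((1/β_R)·ln(1+v) − (1/β_L)·ln(1−v))`. -/
theorem stmt12 (βL βR v : ℝ) (hL : 0 < βL) (hR : 0 < βR)
    (hv1 : -1 < v) (hv2 : v < 1) (hv0 : v ≠ 0) :
    Tendsto (fun E : ℝ => Rfun βL (-v) E + Rfun βR v E)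
      (nhdsWithin 0 (Set.Ioi 0))
      (nhds ((Real.sqrt (1 - v ^ 2) / (4 * π * v)) *
        ((1 / βR) * Real.log (1 + v) - (1 / βL) * Real.log (1 - v)))) :=
  stmt12_general βL βR v hL hR hv1 hv2
end

section
/- Let a > 0 and define Q_a : (−1,1) → ℝ by Q_a(v) := (√(1 − v²)·(e^a − 1)/(v a))·ln((1 − e^{−a√(1 − v²)})/(1 − e^{−a√((1 − v)/(1 + v))})) for v ≠ 0 and Q_a(0) := 1. Then Q_a is differentiable at v = 0 with derivative Q_a′(0) = (e^a(a − 2) + 2)/(2(e^a − 1)). In particular Q_a′(0) = 0 if and only if e^a(a − 2) + 2 = 0. -/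
/-!
Let `g(v) = log(1 - e^{-a√(1-v²)}) - log(1 - e^{-a D(v)})` with the Doppler factor
`D(v) = √((1-v)/(1+v))`. Since `g(0) = 0`, near `v = 0` we have
`Q_a(v) = (e^a - 1)/a · √(1-v²) · dslope g 0 v`, where at `v = 0` the value
`g'(0) = a/(e^a - 1)` matches `Q_a(0) = 1`. By second-order Taylor expansion the difference
quotient `dslope g 0` has derivative `g''(0)/2` at `0`, and `√(1-v²)` is stationary at `0`, so
`Q_a'(0) = (e^a - 1)/(2a) · g''(0)`. With `h(x) = log(1 - e^{-ax})` and the expansions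
`√(1-v²) = 1 - v²/2 + O(v³)`, `D(v) = 1 - v + v²/2 + O(v³)` one finds
`g''(0) = -2h'(1) - h''(1)`, where `h'(x) = a/(e^{ax} - 1)`.
-/

open Real

/-- The quotient `Q_a(v)` of the transition rates of a detector moving with velocity `v`,
respectively at rest, in the NESS with the left reservoir in the vacuum state. -/
noncomputable def Qfun (a v : ℝ) : ℝ :=
  if v = 0 then 1
  else (Real.sqrt (1 - v ^ 2) * (Real.exp a - 1) / (v * a)) *
    Real.log ((1 - Real.exp (-(a * Real.sqrt (1 - v ^ 2)))) /
      (1 - Real.exp (-(a * Real.sqrt ((1 - v) / (1 + v))))))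

open Filter Topology Asymptotics

section Taylor

variable {E : Type*} [NormedAddCommGroup E] [NormedSpace ℝ E]
  {f f' : ℝ → E} {f'' : E} {a : ℝ}

theorem isLittleO_sub_taylor_two (hf : ∀ᶠ x in 𝓝 a, HasDerivAt f (f' x) x)
    (hf' : HasDerivAt f' f'' a) :
    (fun x ↦ f x - f a - (x - a) • f' a - ((x - a) ^ 2 / 2) • f'') =o[𝓝 a]
      fun x ↦ (x - a) ^ 2 := by
  obtain ⟨δ, hδ, hball⟩ := Metric.eventually_nhds_iff_ball.mp hf
  set s := Metric.ball a δ
  have hs : s ∈ 𝓝 a := Metric.ball_mem_nhds a hδ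
  have hrem : ∀ x ∈ s,
      HasDerivWithinAt (fun x ↦ f x - (x - a) • f' a - ((x - a) ^ 2 / 2) • f'')
        (f' x - f' a - (x - a) • f'') s x := by
    intro x hx
    have hlin : HasDerivAt (fun x : ℝ ↦ (x - a) • f' a) (f' a) x := by
      simpa using ((hasDerivAt_id x).sub_const a).smul_const (f' a)
    have hquad : HasDerivAt (fun x : ℝ ↦ ((x - a) ^ 2 / 2) • f'') ((x - a) • f'') x := by
      convert (((hasDerivAt_id' x).sub_const a).fun_pow 2).div_const 2 |>.smul_const f'' using 2
      norm_num
    exact ((hball x hx).sub hlin).sub hquad |>.hasDerivWithinAt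
  have htaylor := (convex_ball a δ).isLittleO_pow_succ_real (Metric.mem_ball_self hδ) hrem
    (n := 1) (by rw [nhdsWithin_eq_nhds.mpr hs]; simpa using hasDerivAt_iff_isLittleO.mp hf')
  rw [nhdsWithin_eq_nhds.mpr hs] at htaylor
  exact htaylor.congr_left fun x ↦ by module

theorem hasDerivAt_dslope_same (hf : ∀ᶠ x in 𝓝 a, HasDerivAt f (f' x) x)
    (hf' : HasDerivAt f' f'' a) :
    HasDerivAt (dslope f a) ((2 : ℝ)⁻¹ • f'') a := by
  rw [hasDerivAt_iff_isLittleO]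
  have h := (isBigO_refl (fun x : ℝ ↦ (x - a)⁻¹) (𝓝 a)).smul_isLittleO
    (isLittleO_sub_taylor_two hf hf')
  refine (h.congr (fun x ↦ ?_) (fun x ↦ ?_))
  · rcases eq_or_ne x a with rfl | hx
    · simp
    · rw [dslope_same, dslope_of_ne _ hx, slope_def_module]
      have hxa : x - a ≠ 0 := sub_ne_zero.mpr hx
      rw [hf.self_of_nhds.deriv]
      simp only [smul_sub, smul_smul]
      field_simp
      module
  · rcases eq_or_ne x a with rfl | hx
    · simp
    · rw [smul_eq_mul]
      field_simp [sub_ne_zero.mpr hx]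

end Taylor

noncomputable def invLorentzFactor (v : ℝ) : ℝ := √(1 - v ^ 2)

noncomputable def dopplerFactor (v : ℝ) : ℝ := √((1 - v) / (1 + v))

noncomputable def logOneSubExpNeg (a x : ℝ) : ℝ := log (1 - exp (-(a * x)))

noncomputable def logRateRatio (a v : ℝ) : ℝ :=
  logOneSubExpNeg a (invLorentzFactor v) - logOneSubExpNeg a (dopplerFactor v)

noncomputable def logRateRatioDeriv (a v : ℝ) : ℝ :=
  a / (exp (a * invLorentzFactor v) - 1) * (-v / invLorentzFactor v) -
    a / (exp (a * dopplerFactor v) - 1) * (-dopplerFactor v / (1 - v ^ 2))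

section Kinematics

variable {v : ℝ}

@[simp] lemma invLorentzFactor_zero : invLorentzFactor 0 = 1 := by simp [invLorentzFactor]

@[simp] lemma dopplerFactor_zero : dopplerFactor 0 = 1 := by simp [dopplerFactor]

lemma invLorentzFactor_pos (hv : |v| < 1) : 0 < invLorentzFactor v :=
  sqrt_pos.mpr (sub_pos.mpr ((sq_lt_one_iff_abs_lt_one v).mpr hv))

lemma one_sub_div_one_add_pos (hv : |v| < 1) : 0 < (1 - v) / (1 + v) := by
  obtain ⟨h₁, h₂⟩ := abs_lt.mp hv
  exact div_pos (by linarith) (by linarith)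

lemma dopplerFactor_pos (hv : |v| < 1) : 0 < dopplerFactor v :=
  sqrt_pos.mpr (one_sub_div_one_add_pos hv)

lemma hasDerivAt_invLorentzFactor (hv : |v| < 1) :
    HasDerivAt invLorentzFactor (-v / invLorentzFactor v) v := by
  have hp := invLorentzFactor_pos hv
  refine ((((hasDerivAt_id' v).fun_pow 2).const_sub 1).sqrt (sqrt_pos.mp hp).ne').congr_deriv ?_
  rw [invLorentzFactor] at hp ⊢
  field_simp
  norm_num

lemma hasDerivAt_dopplerFactor (hv : |v| < 1) :
    HasDerivAt dopplerFactor (-dopplerFactor v / (1 - v ^ 2)) v := by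
  have hr := one_sub_div_one_add_pos hv
  have h1v : 1 + v ≠ 0 := by linarith [abs_lt.mp hv]
  have h1v2 : 1 - v ^ 2 ≠ 0 := (sub_pos.mpr ((sq_lt_one_iff_abs_lt_one v).mpr hv)).ne'
  refine (((hasDerivAt_id' v).const_sub 1).fun_div ((hasDerivAt_id' v).const_add 1)
    h1v).sqrt hr.ne' |>.congr_deriv ?_
  have hD := (dopplerFactor_pos hv).ne'
  have hD2 : dopplerFactor v ^ 2 = (1 - v) / (1 + v) := sq_sqrt hr.le
  rw [dopplerFactor] at hD hD2 ⊢
  field_simp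
  rw [hD2]
  field_simp
  ring

lemma hasDerivAt_neg_div_invLorentzFactor_zero :
    HasDerivAt (fun v ↦ -v / invLorentzFactor v) (-1) 0 := by
  have h := (hasDerivAt_id' (0 : ℝ)).fun_neg.fun_div (hasDerivAt_invLorentzFactor (by simp))
    (by simp)
  simpa using h

lemma hasDerivAt_neg_dopplerFactor_div_zero :
    HasDerivAt (fun v ↦ -dopplerFactor v / (1 - v ^ 2)) 1 0 := by
  have h := (hasDerivAt_dopplerFactor (v := 0) (by simp)).fun_neg.fun_div
    (((hasDerivAt_id' (0 : ℝ)).fun_pow 2).const_sub 1) (by simp)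
  simpa using h

end Kinematics

section LogRateRatio

variable {a x v : ℝ}

lemma one_sub_exp_neg_ne_zero (h : a * x ≠ 0) : 1 - exp (-(a * x)) ≠ 0 := by
  rw [sub_ne_zero, ne_comm, Ne, exp_eq_one_iff, neg_eq_zero]
  exact h

lemma exp_sub_one_ne_zero (h : x ≠ 0) : exp x - 1 ≠ 0 := by
  rw [sub_ne_zero, Ne, exp_eq_one_iff]
  exact h

lemma hasDerivAt_logOneSubExpNeg (h : a * x ≠ 0) :
    HasDerivAt (logOneSubExpNeg a) (a / (exp (a * x) - 1)) x := by
  have hinner := ((hasDerivAt_id' x).const_mul a).fun_neg.exp.const_sub 1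
  refine (hinner.log (one_sub_exp_neg_ne_zero h)).congr_deriv ?_
  have := exp_sub_one_ne_zero h
  have := one_sub_exp_neg_ne_zero h
  rw [exp_neg] at *
  field_simp

lemma hasDerivAt_div_exp_mul_sub_one (h : a * x ≠ 0) :
    HasDerivAt (fun y ↦ a / (exp (a * y) - 1))
      (-(a ^ 2 * exp (a * x)) / (exp (a * x) - 1) ^ 2) x := by
  have hden := (((hasDerivAt_id' x).const_mul a).exp.sub_const 1)
  refine ((hasDerivAt_const x a).fun_div hden (exp_sub_one_ne_zero h)).congr_deriv ?_
  field_simp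
  ring

lemma hasDerivAt_logRateRatio (ha : a ≠ 0) (hv : |v| < 1) :
    HasDerivAt (logRateRatio a) (logRateRatioDeriv a v) v :=
  ((hasDerivAt_logOneSubExpNeg (mul_ne_zero ha (invLorentzFactor_pos hv).ne')).comp v
    (hasDerivAt_invLorentzFactor hv)).sub
  ((hasDerivAt_logOneSubExpNeg (mul_ne_zero ha (dopplerFactor_pos hv).ne')).comp v
    (hasDerivAt_dopplerFactor hv))

lemma hasDerivAt_logRateRatioDeriv_zero (ha : a ≠ 0) :
    HasDerivAt (logRateRatioDeriv a)
      (a ^ 2 * exp a / (exp a - 1) ^ 2 - 2 * a / (exp a - 1)) 0 := by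
  have hp := (hasDerivAt_div_exp_mul_sub_one (a := a) (x := invLorentzFactor 0) (by simpa)).comp 0
    (hasDerivAt_invLorentzFactor (by simp))
  have hD := (hasDerivAt_div_exp_mul_sub_one (a := a) (x := dopplerFactor 0) (by simpa)).comp 0
    (hasDerivAt_dopplerFactor (by simp))
  refine ((hp.mul hasDerivAt_neg_div_invLorentzFactor_zero).sub
    (hD.mul hasDerivAt_neg_dopplerFactor_div_zero)).congr_deriv ?_
  have := exp_sub_one_ne_zero ha
  simp only [Function.comp_apply, invLorentzFactor_zero, dopplerFactor_zero, mul_one]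
  field_simp
  ring

lemma qfun_eq_dslope_logRateRatio (ha : a ≠ 0) (hv : |v| < 1) :
    Qfun a v = (exp a - 1) / a * (invLorentzFactor v * dslope (logRateRatio a) 0 v) := by
  have := exp_sub_one_ne_zero ha
  rcases eq_or_ne v 0 with rfl | hv0
  · rw [dslope_same, (hasDerivAt_logRateRatio ha hv).deriv]
    simp only [Qfun, if_pos, logRateRatioDeriv, invLorentzFactor_zero, dopplerFactor_zero, mul_one]
    field_simp
    ring
  · rw [Qfun, if_neg hv0, dslope_of_ne _ hv0, slope_def_field]
    simp only [logRateRatio, logOneSubExpNeg, invLorentzFactor_zero, dopplerFactor_zero, sub_self,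
      sub_zero]
    rw [← log_div (one_sub_exp_neg_ne_zero (mul_ne_zero ha (invLorentzFactor_pos hv).ne'))
      (one_sub_exp_neg_ne_zero (mul_ne_zero ha (dopplerFactor_pos hv).ne'))]
    simp only [invLorentzFactor, dopplerFactor]
    field_simp

end LogRateRatio

/-- For `a > 0`, the quotient `Q_a` is differentiable at `v = 0` with
derivative `Q_a′(0) = (e^a(a − 2) + 2)/(2(e^a − 1))`; in particular `Q_a′(0) = 0` iff
`e^a(a − 2) + 2 = 0`. -/
theorem stmt13 (a : ℝ) (ha : 0 < a) :
    HasDerivAt (Qfun a) ((Real.exp a * (a - 2) + 2) / (2 * (Real.exp a - 1))) 0 ∧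
    (deriv (Qfun a) 0 = 0 ↔ Real.exp a * (a - 2) + 2 = 0) := by
  have hexp := exp_sub_one_ne_zero ha.ne'
  have hsmall : ∀ᶠ v in 𝓝 (0 : ℝ), |v| < 1 := by
    filter_upwards [Metric.ball_mem_nhds (0 : ℝ) one_pos] with v hv
    simpa using hv
  have hslope := hasDerivAt_dslope_same (hsmall.mono fun v hv ↦ hasDerivAt_logRateRatio ha.ne' hv)
    (hasDerivAt_logRateRatioDeriv_zero ha.ne')
  have hQ : HasDerivAt (Qfun a) ((exp a * (a - 2) + 2) / (2 * (exp a - 1))) 0 := by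
    refine (((hasDerivAt_invLorentzFactor (by simp)).mul hslope).const_mul ((exp a - 1) / a)
      |>.congr_of_eventuallyEq (hsmall.mono fun v hv ↦ qfun_eq_dslope_logRateRatio ha.ne' hv)
      |>.congr_deriv ?_)
    simp only [invLorentzFactor_zero, smul_eq_mul]
    field_simp
    ring
  refine ⟨hQ, ?_⟩
  rw [hQ.deriv, div_eq_zero_iff, or_iff_left (mul_ne_zero two_ne_zero hexp)]
end

section
/- Let β_L, β_R > 0. For E > 0 the quantity A(E) := (2e^{(β_L + β_R)E} − e^{β_L E} − e^{β_R E})/(e^{β_L E} + e^{β_R E} − 2) is well defined and greater than 1, and lim_{E→0⁺} E/ln(A(E)) = (1/2)·(1/β_L + 1/β_R). -/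
/-!
Write `a = e^{β_L E}` and `b = e^{β_R E}`. Then `A - 1 = 2(a - 1)(b - 1)/(a + b - 2)`, i.e.
`1/(A - 1) = (1/(a - 1) + 1/(b - 1))/2`, so `A > 1` once `a, b > 1`, and `E/(A - 1)` tends to
`(1/β_L + 1/β_R)/2` because `E/(e^{βE} - 1) → 1/β`. In particular `A → 1`, and since
`log A ~ A - 1` there, `E/log A` has the same limit as `E/(A - 1)`.
-/

open Real Filter Topology

section DetailedBalanceRatio

variable {K : Type*} [Field K]

def detailedBalanceRatio (a b : K) : K :=
  (2 * (a * b) - a - b) / (a + b - 2)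

theorem detailedBalanceRatio_sub_one {a b : K} (hab : a + b - 2 ≠ 0) :
    detailedBalanceRatio a b - 1 = 2 * (a - 1) * (b - 1) / (a + b - 2) := by
  rw [detailedBalanceRatio, div_sub_one hab]
  ring

theorem inv_detailedBalanceRatio_sub_one [NeZero (2 : K)] {a b : K} (ha : a ≠ 1) (hb : b ≠ 1)
    (hab : a + b - 2 ≠ 0) :
    (detailedBalanceRatio a b - 1)⁻¹ = ((a - 1)⁻¹ + (b - 1)⁻¹) / 2 := by
  have ha' : a - 1 ≠ 0 := sub_ne_zero.2 ha
  have hb' : b - 1 ≠ 0 := sub_ne_zero.2 hb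
  rw [detailedBalanceRatio_sub_one hab]
  field_simp
  ring

theorem one_lt_detailedBalanceRatio [LinearOrder K] [IsStrictOrderedRing K] {a b : K}
    (ha : 1 < a) (hb : 1 < b) : 1 < detailedBalanceRatio a b := by
  have hab : 0 < a + b - 2 := by linarith
  rw [← sub_pos, detailedBalanceRatio_sub_one hab.ne']
  have hprod := mul_pos (sub_pos.2 ha) (sub_pos.2 hb)
  positivity

end DetailedBalanceRatio

theorem tendsto_div_exp_mul_sub_one {β : ℝ} (hβ : β ≠ 0) :
    Tendsto (fun x => x / (exp (β * x) - 1)) (𝓝[≠] 0) (𝓝 β⁻¹) := by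
  have hderiv : HasDerivAt (fun x => exp (β * x)) β 0 := by
    simpa using ((hasDerivAt_id (0 : ℝ)).const_mul β).exp
  refine (hderiv.tendsto_slope.inv₀ hβ).congr fun x => ?_
  simp [slope_def_field, inv_div]

theorem tendsto_log_div_sub_one : Tendsto (fun x => log x / (x - 1)) (𝓝[≠] 1) (𝓝 1) := by
  have hslope := (hasDerivAt_log one_ne_zero).tendsto_slope
  rw [inv_one] at hslope
  exact hslope.congr fun x => by simp [slope_def_field]

theorem Filter.Tendsto.div_log_of_div_sub_one {α : Type*} {l : Filter α} {f g : α → ℝ} {c : ℝ}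
    (hf : Tendsto f l (𝓝[≠] 1)) (hg : Tendsto (fun x => g x / (f x - 1)) l (𝓝 c)) :
    Tendsto (fun x => g x / Real.log (f x)) l (𝓝 c) := by
  have hlog := (tendsto_log_div_sub_one.comp hf).inv₀ one_ne_zero
  rw [inv_one] at hlog
  refine (mul_one c ▸ hg.mul hlog).congr' ?_
  filter_upwards [hf self_mem_nhdsWithin] with x hx
  rw [Function.comp_apply, inv_div, div_mul_div_cancel₀ (sub_ne_zero.2 hx)]

theorem Filter.Tendsto.nhdsNE_one_of_div_sub_one {α : Type*} {l : Filter α} {f g : α → ℝ}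
    {c : ℝ} (hg : Tendsto g l (𝓝 0)) (hgf : Tendsto (fun x => g x / (f x - 1)) l (𝓝 c))
    (hc : c ≠ 0) : Tendsto f l (𝓝[≠] 1) := by
  have hne : ∀ᶠ x in l, g x ≠ 0 ∧ f x - 1 ≠ 0 := by
    filter_upwards [hgf.eventually_ne hc] with x hx
    exact div_ne_zero_iff.1 hx
  have hf : Tendsto (fun x => 1 + g x / (g x / (f x - 1))) l (𝓝 1) := by
    simpa using tendsto_const_nhds.add (hg.div hgf hc)
  refine tendsto_nhdsWithin_iff.2 ⟨hf.congr' ?_, ?_⟩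
  · filter_upwards [hne] with x hx
    rw [div_div_cancel₀ hx.1]
    ring
  · filter_upwards [hne] with x hx
    exact sub_ne_zero.1 hx.2

theorem tendsto_div_detailedBalanceRatio_exp_sub_one {βL βR : ℝ} (hL : 0 < βL) (hR : 0 < βR) :
    Tendsto (fun E => E / (detailedBalanceRatio (exp (βL * E)) (exp (βR * E)) - 1)) (𝓝[>] 0)
      (𝓝 ((1 / 2) * (1 / βL + 1 / βR))) := by
  have hL' := (tendsto_div_exp_mul_sub_one hL.ne').mono_left (nhdsGT_le_nhdsNE 0)
  have hR' := (tendsto_div_exp_mul_sub_one hR.ne').mono_left (nhdsGT_le_nhdsNE 0)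
  simp only [one_div]
  refine ((hL'.add hR').const_mul 2⁻¹).congr' ?_
  filter_upwards [self_mem_nhdsWithin] with E (hE : 0 < E)
  have ha := one_lt_exp_iff.2 (mul_pos hL hE)
  have hb := one_lt_exp_iff.2 (mul_pos hR hE)
  rw [div_eq_mul_inv E (detailedBalanceRatio _ _ - 1),
    inv_detailedBalanceRatio_sub_one ha.ne' hb.ne' (by linarith)]
  ring

/-- For `β_L, β_R > 0` and `E > 0`, the quantity
`A(E) = (2e^{(β_L+β_R)E} − e^{β_L E} − e^{β_R E})/(e^{β_L E} + e^{β_R E} − 2)` is well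
defined (the denominator is positive) and `A(E) > 1`, and the detailed balance effective
temperature satisfies `lim_{E→0⁺} E/ln(A(E)) = (1/2)(1/β_L + 1/β_R)`. -/
theorem stmt15 (βL βR : ℝ) (hL : 0 < βL) (hR : 0 < βR) :
    (∀ E : ℝ, 0 < E →
      0 < Real.exp (βL * E) + Real.exp (βR * E) - 2 ∧
      1 < (2 * Real.exp ((βL + βR) * E) - Real.exp (βL * E) - Real.exp (βR * E)) /
            (Real.exp (βL * E) + Real.exp (βR * E) - 2)) ∧
    Tendsto (fun E : ℝ => E / Real.log
        ((2 * Real.exp ((βL + βR) * E) - Real.exp (βL * E) - Real.exp (βR * E)) /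
          (Real.exp (βL * E) + Real.exp (βR * E) - 2)))
      (nhdsWithin 0 (Set.Ioi 0))
      (nhds ((1 / 2) * (1 / βL + 1 / βR))) := by
  have hA : ∀ E, (2 * exp ((βL + βR) * E) - exp (βL * E) - exp (βR * E)) /
      (exp (βL * E) + exp (βR * E) - 2) = detailedBalanceRatio (exp (βL * E)) (exp (βR * E)) :=
    fun E => by rw [add_mul, exp_add]; rfl
  simp only [hA]
  have hlim := tendsto_div_detailedBalanceRatio_exp_sub_one hL hR
  refine ⟨fun E hE => ?_, ?_⟩
  · have ha := one_lt_exp_iff.2 (mul_pos hL hE)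
    have hb := one_lt_exp_iff.2 (mul_pos hR hE)
    exact ⟨by linarith, one_lt_detailedBalanceRatio ha hb⟩
  · have hE : Tendsto (fun E : ℝ => E) (𝓝[>] 0) (𝓝 0) := tendsto_id.mono_left nhdsWithin_le_nhds
    exact (hE.nhdsNE_one_of_div_sub_one hlim (by positivity)).div_log_of_div_sub_one hlim
end

section
/- Let β_L, β_R > 0 and define 𝛃(p₁) := β_L if p₁ > 0 and β_R if p₁ < 0. Then the function p ↦ ‖p‖/(e^{𝛃(p₁)‖p‖} − 1) is integrable on ℝ³ and (2π)^{−3}·∫_{ℝ³} ‖p‖/(e^{𝛃(p₁)‖p‖} − 1) dp = (π²/60)·(1/β_L⁴ + 1/β_R⁴). -/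
open MeasureTheory Real Set Nat

/-!
Expanding `1 / (e^x - 1) = ∑_{n ≥ 1} e^{-n x}` and integrating termwise against `r ^ 3` gives
`∫₀^∞ r³ / (e^{βr} - 1) dr = 3! ζ(4) / β⁴ = π⁴ / (15 β⁴)`, so in polar coordinates
`∫_{ℝ³} ‖p‖ / (e^{β‖p‖} - 1) dp = 4π⁵ / (15 β⁴)`. The reflection `p ↦ -p` preserves this radial
integrand and swaps the half-spaces `p₁ > 0` and `p₁ < 0`, while the plane `p₁ = 0` is null, so
each half-space carries half of the full integral at its own inverse temperature.
-/

lemma hasSum_exp_neg_nat_succ_mul {x : ℝ} (hx : 0 < x) :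
    HasSum (fun n : ℕ => exp (-((n + 1) * x))) (1 / (exp x - 1)) := by
  have hq : exp (-x) < 1 := exp_lt_one_iff.2 (neg_lt_zero.2 hx)
  have hgeo := (hasSum_geometric_of_lt_one (exp_pos _).le hq).mul_left (exp (-x))
  have hterm : (fun n : ℕ => exp (-((n + 1) * x))) = fun n => exp (-x) * exp (-x) ^ n := by
    funext n
    rw [← exp_nat_mul, ← exp_add]
    ring_nf
  have hval : 1 / (exp x - 1) = exp (-x) * (1 - exp (-x))⁻¹ := by
    have h1 : exp x - 1 ≠ 0 := (sub_pos.2 (one_lt_exp_iff.2 hx)).ne'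
    rw [exp_neg]
    field_simp
  rw [hterm, hval]
  exact hgeo

lemma half_mul_mul_exp_half_le_exp_sub_one {x : ℝ} (hx : 0 ≤ x) :
    x / 2 * exp (x / 2) ≤ exp x - 1 := by
  have h1 : x / 2 + 1 ≤ exp (x / 2) := add_one_le_exp _
  have h2 : exp (x / 2) * exp (x / 2) = exp x := by rw [← exp_add, add_halves]
  nlinarith [exp_pos (x / 2)]

lemma integrableOn_pow_mul_exp_neg_mul (k : ℕ) {a : ℝ} (ha : 0 < a) :
    IntegrableOn (fun r : ℝ => r ^ k * exp (-(a * r))) (Ioi 0) := by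
  refine (integrableOn_rpow_mul_exp_neg_mul_rpow (p := 1) (s := k)
    (neg_one_lt_zero.trans_le k.cast_nonneg) one_pos ha).congr_fun (fun r _ => ?_) measurableSet_Ioi
  simp [rpow_natCast, neg_mul]

lemma integral_pow_mul_exp_neg_mul (k : ℕ) {a : ℝ} (ha : 0 < a) :
    ∫ r in Ioi (0 : ℝ), r ^ k * exp (-(a * r)) = k ! / a ^ (k + 1) := by
  have h := integral_rpow_mul_exp_neg_mul_Ioi (a := k + 1) (by positivity) ha
  rw [add_sub_cancel_right, Gamma_nat_eq_factorial, one_div, inv_rpow ha.le,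
    ← Nat.cast_succ, rpow_natCast] at h
  simp_rw [rpow_natCast] at h
  rw [h, inv_mul_eq_div]

section Bose

variable {β : ℝ}

lemma pow_succ_div_exp_sub_one_le (hβ : 0 < β) (k : ℕ) {r : ℝ} (hr : 0 < r) :
    r ^ (k + 1) / (exp (β * r) - 1) ≤ 2 / β * (r ^ k * exp (-(β / 2 * r))) := by
  have hd : 0 < exp (β * r) - 1 := sub_pos.2 (one_lt_exp_iff.2 (by positivity))
  have hbound := half_mul_mul_exp_half_le_exp_sub_one (mul_pos hβ hr).le
  rw [div_le_iff₀ hd]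
  calc r ^ (k + 1) = 2 / β * (r ^ k * exp (-(β / 2 * r))) * (β * r / 2 * exp (β * r / 2)) := by
        rw [exp_neg, show β / 2 * r = β * r / 2 by ring]
        field_simp
        ring
    _ ≤ 2 / β * (r ^ k * exp (-(β / 2 * r))) * (exp (β * r) - 1) := by gcongr

lemma integrableOn_pow_succ_div_exp_sub_one (hβ : 0 < β) (k : ℕ) :
    IntegrableOn (fun r : ℝ => r ^ (k + 1) / (exp (β * r) - 1)) (Ioi 0) := by
  refine ((integrableOn_pow_mul_exp_neg_mul k (half_pos hβ)).const_mul (2 / β)).mono' ?_ ?_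
  · exact (by fun_prop : Measurable fun r : ℝ => r ^ (k + 1) / (exp (β * r) - 1))
      |>.aestronglyMeasurable
  · filter_upwards [ae_restrict_mem measurableSet_Ioi] with r (hr : 0 < r)
    have hd : 0 < exp (β * r) - 1 := sub_pos.2 (one_lt_exp_iff.2 (by positivity))
    rw [Real.norm_of_nonneg (by positivity)]
    exact pow_succ_div_exp_sub_one_le hβ k hr

theorem hasSum_integral_pow_succ_div_exp_sub_one (hβ : 0 < β) (k : ℕ) :
    HasSum (fun n : ℕ => (k + 1)! / ((n + 1) * β) ^ (k + 2))
      (∫ r in Ioi (0 : ℝ), r ^ (k + 1) / (exp (β * r) - 1)) := by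
  set F : ℕ → ℝ → ℝ := fun n r => r ^ (k + 1) * exp (-(((n : ℝ) + 1) * β * r))
  have hpos : ∀ n : ℕ, 0 < ((n : ℝ) + 1) * β := fun n => by positivity
  have hF : ∀ n, ∫ r in Ioi (0 : ℝ), F n r = (k + 1)! / ((n + 1) * β) ^ (k + 2) :=
    fun n => integral_pow_mul_exp_neg_mul (k + 1) (hpos n)
  have hsum : Summable fun n : ℕ => (k + 1)! / (((n : ℝ) + 1) * β) ^ (k + 2) := by
    have h := (summable_nat_add_iff 1).2 (Real.summable_one_div_nat_pow.2 (by omega : 1 < k + 2))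
    refine (h.mul_left ((k + 1)! / β ^ (k + 2))).congr fun n => ?_
    push_cast
    rw [mul_pow]
    field_simp
  have hnorm : ∀ n, ∫ r in Ioi (0 : ℝ), ‖F n r‖ = ∫ r in Ioi (0 : ℝ), F n r := fun n =>
    setIntegral_congr_fun measurableSet_Ioi fun r (hr : 0 < r) =>
      Real.norm_of_nonneg (by positivity)
  have key := hasSum_integral_of_summable_integral_norm
    (fun n => integrableOn_pow_mul_exp_neg_mul (k + 1) (hpos n))
    (hsum.congr fun n => by rw [hnorm, hF])
  have hpointwise : ∀ r ∈ Ioi (0 : ℝ), ∑' n, F n r = r ^ (k + 1) / (exp (β * r) - 1) :=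
    fun r (hr : 0 < r) => by
      have h := (hasSum_exp_neg_nat_succ_mul (mul_pos hβ hr)).mul_left (r ^ (k + 1))
      simp only [F, mul_assoc, ← div_eq_mul_one_div] at h ⊢
      exact h.tsum_eq
  rwa [funext hF, setIntegral_congr_fun measurableSet_Ioi hpointwise] at key

end Bose

section HalfSpace

variable {E : Type*} [NormedAddCommGroup E] [NormedSpace ℝ E] [FiniteDimensional ℝ E]
  [MeasurableSpace E] [BorelSpace E] {μ : Measure E} [μ.IsAddHaarMeasure]
  {ℓ : E →L[ℝ] ℝ} {g : E → ℝ}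

lemma addHaar_setOf_apply_eq_zero (hℓ : ℓ ≠ 0) : μ {x | ℓ x = 0} = 0 :=
  Measure.addHaar_submodule μ (LinearMap.ker (ℓ : E →ₗ[ℝ] ℝ))
    fun h => hℓ (ContinuousLinearMap.coe_injective (LinearMap.ker_eq_top.1 h))

lemma compl_setOf_pos_ae_eq_setOf_neg (hℓ : ℓ ≠ 0) :
    ({x | 0 < ℓ x}ᶜ : Set E) =ᵐ[μ] {x | ℓ x < 0} := by
  have h : ({x | 0 < ℓ x}ᶜ : Set E) = {x | ℓ x < 0} ∪ {x | ℓ x = 0} := by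
    ext x
    simp only [mem_compl_iff, mem_ofPred_eq, mem_union, not_lt]
    exact le_iff_lt_or_eq
  rw [h]
  exact union_ae_eq_left_of_ae_eq_empty (ae_eq_empty.2 (addHaar_setOf_apply_eq_zero hℓ))

lemma setIntegral_setOf_pos_eq_setOf_neg (heven : ∀ x, g (-x) = g x) :
    ∫ x in {x | 0 < ℓ x}, g x ∂μ = ∫ x in {x | ℓ x < 0}, g x ∂μ := by
  have hpre : (fun x : E => -x) ⁻¹' {x | ℓ x < 0} = {x | 0 < ℓ x} := by
    ext x
    simp
  have h := (Measure.measurePreserving_neg μ).setIntegral_preimage_emb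
    (Homeomorph.neg E).measurableEmbedding g {x | ℓ x < 0}
  rwa [hpre, funext heven] at h

lemma setIntegral_setOf_pos_eq_half (hℓ : ℓ ≠ 0) (hg : Integrable g μ)
    (heven : ∀ x, g (-x) = g x) :
    ∫ x in {x | 0 < ℓ x}, g x ∂μ = (∫ x, g x ∂μ) / 2 := by
  have hS : MeasurableSet {x | 0 < ℓ x} := measurableSet_lt measurable_const ℓ.measurable
  have := integral_add_compl hS hg
  rw [setIntegral_congr_set (compl_setOf_pos_ae_eq_setOf_neg hℓ),
    ← setIntegral_setOf_pos_eq_setOf_neg heven] at this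
  linarith

lemma setIntegral_compl_setOf_pos_eq_half (hℓ : ℓ ≠ 0) (hg : Integrable g μ)
    (heven : ∀ x, g (-x) = g x) :
    ∫ x in {x | 0 < ℓ x}ᶜ, g x ∂μ = (∫ x, g x ∂μ) / 2 := by
  have hS : MeasurableSet {x | 0 < ℓ x} := measurableSet_lt measurable_const ℓ.measurable
  have := integral_add_compl hS hg
  rw [setIntegral_setOf_pos_eq_half hℓ hg heven] at this
  linarith

end HalfSpace

local notation "ℝ³" => EuclideanSpace ℝ (Fin 3)

lemma integral_fun_norm_euclideanSpace_fin_three {F : Type*} [NormedAddCommGroup F]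
    [NormedSpace ℝ F] (f : ℝ → F) :
    ∫ p : ℝ³, f ‖p‖ = (4 * π) • ∫ r in Ioi (0 : ℝ), r ^ 2 • f r := by
  rw [integral_fun_norm_addHaar, finrank_euclideanSpace_fin, measureReal_def,
    EuclideanSpace.volume_ball_fin_three]
  simp only [ENNReal.toReal_ofReal (by positivity : 0 ≤ π * 4 / 3), one_pow, one_mul,
    ENNReal.ofReal_one]
  rw [← Nat.cast_smul_eq_nsmul ℝ, smul_smul]
  congr 1
  ring

lemma proj_zero_ne_zero : (EuclideanSpace.proj 0 : ℝ³ →L[ℝ] ℝ) ≠ 0 := by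
  intro h
  simpa using congr($h (EuclideanSpace.single 0 1))

lemma integrable_norm_div_exp_sub_one {β : ℝ} (hβ : 0 < β) :
    Integrable (fun p : ℝ³ => ‖p‖ / (exp (β * ‖p‖) - 1)) := by
  refine (integrable_fun_norm_addHaar volume (f := fun r => r / (exp (β * r) - 1))).2 ?_
  rw [finrank_euclideanSpace_fin]
  refine (integrableOn_pow_succ_div_exp_sub_one hβ 2).congr_fun (fun r _ => ?_) measurableSet_Ioi
  simp only [smul_eq_mul, ← mul_div_assoc, ← pow_succ]

lemma integral_norm_div_exp_sub_one {β : ℝ} (hβ : 0 < β) :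
    ∫ p : ℝ³, ‖p‖ / (exp (β * ‖p‖) - 1) = 4 * π ^ 5 / (15 * β ^ 4) := by
  have hzeta : HasSum (fun n : ℕ => 1 / ((n : ℝ) + 1) ^ 4) (π ^ 4 / 90) := by
    simpa using (hasSum_nat_add_iff' 1).2 hasSum_zeta_four
  have hseries :
      HasSum (fun n : ℕ => (2 + 1)! / ((n + 1) * β) ^ (2 + 2)) (6 / β ^ 4 * (π ^ 4 / 90)) :=
    (hzeta.mul_left (6 / β ^ 4)).congr_fun fun n => by
      simp only [factorial, mul_pow]
      norm_num
      field_simp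
  rw [integral_fun_norm_euclideanSpace_fin_three (fun r => r / (exp (β * r) - 1))]
  simp only [smul_eq_mul, ← mul_div_assoc, ← pow_succ]
  rw [(hasSum_integral_pow_succ_div_exp_sub_one hβ 2).unique hseries]
  field_simp
  ring

/-- The expected energy density of the NESS: with `𝛃(p₁) = β_L` for
`p₁ > 0` and `β_R` for `p₁ < 0`, the function `p ↦ ‖p‖/(e^{𝛃(p₁)‖p‖} − 1)` is integrable
on `ℝ³` and `(2π)^{-3} ∫_{ℝ³} ‖p‖/(e^{𝛃(p₁)‖p‖} − 1) dp = (π²/60)(1/β_L⁴ + 1/β_R⁴)`. -/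
theorem stmt17 (βL βR : ℝ) (hL : 0 < βL) (hR : 0 < βR) :
    Integrable (fun p : EuclideanSpace ℝ (Fin 3) =>
      ‖p‖ / (Real.exp ((if 0 < p 0 then βL else βR) * ‖p‖) - 1)) ∧
    ((2 * π) ^ 3)⁻¹ * ∫ p : EuclideanSpace ℝ (Fin 3),
        ‖p‖ / (Real.exp ((if 0 < p 0 then βL else βR) * ‖p‖) - 1)
      = (π ^ 2 / 60) * (1 / βL ^ 4 + 1 / βR ^ 4) := by
  set S : Set ℝ³ := {p | 0 < (EuclideanSpace.proj 0 : ℝ³ →L[ℝ] ℝ) p}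
  have hS : MeasurableSet S := measurableSet_lt measurable_const (ContinuousLinearMap.measurable _)
  have hpiecewise : (fun p : ℝ³ => ‖p‖ / (exp ((if 0 < p 0 then βL else βR) * ‖p‖) - 1)) =
      S.piecewise (fun p => ‖p‖ / (exp (βL * ‖p‖) - 1)) (fun p => ‖p‖ / (exp (βR * ‖p‖) - 1)) := by
    funext p
    by_cases h : 0 < p 0 <;> simp [S, Set.piecewise, h]
  have heven (β : ℝ) (p : ℝ³) : ‖-p‖ / (exp (β * ‖-p‖) - 1) = ‖p‖ / (exp (β * ‖p‖) - 1) := by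
    rw [norm_neg]
  have hintL := integrable_norm_div_exp_sub_one hL
  have hintR := integrable_norm_div_exp_sub_one hR
  rw [hpiecewise, integral_piecewise hS hintL.integrableOn hintR.integrableOn,
    setIntegral_setOf_pos_eq_half proj_zero_ne_zero hintL (heven βL),
    setIntegral_compl_setOf_pos_eq_half proj_zero_ne_zero hintR (heven βR),
    integral_norm_div_exp_sub_one hL, integral_norm_div_exp_sub_one hR]
  refine ⟨Integrable.piecewise hS hintL.integrableOn hintR.integrableOn, ?_⟩
  field_simp
  ring
end

section
/- Let β_L, β_R > 0. Then the function p ↦ p₁·(1/(e^{β_R‖p‖} − 1) − 1/(e^{β_L‖p‖} − 1)) is integrable on the half-space {p ∈ ℝ³ : p₁ > 0} and (2π)^{−3}·∫_{p₁ > 0} p₁·(1/(e^{β_R‖p‖} − 1) − 1/(e^{β_L‖p‖} − 1)) dp = (π²/120)·(1/β_R⁴ − 1/β_L⁴). -/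
/-!
In polar coordinates `p = r • ω` the integrand `(p₀)⁺ g(‖p‖)` factorises, so
`∫_{p₀>0} p₀ g(‖p‖) dp = C ∫₀^∞ r³ g(r) dr` with `C = ∫_{S²} (ω₀)⁺ dσ`. Testing this against the
Gaussian `g(r) = e^{-r²}`, whose integral splits over the coordinates, gives `C = π`. Expanding
`(e^{βr} - 1)⁻¹ = ∑ₙ e^{-(n+1)βr}` gives `∫₀^∞ r³ (e^{βr} - 1)⁻¹ dr = 3! ζ(4) / β⁴ = π⁴ / (15 β⁴)`.
Everything is done with nonnegative integrands in `ℝ≥0∞`, so finiteness of the value is the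
integrability.
-/

open MeasureTheory Real Set Metric
open scoped ENNReal Nat

theorem lintegral_volumeIoiPow (n : ℕ) {g : ℝ → ℝ≥0∞} (hg : Measurable g) :
    ∫⁻ r, g r.1 ∂(Measure.volumeIoiPow n) = ∫⁻ r in Ioi 0, ENNReal.ofReal (r ^ n) * g r := by
  rw [Measure.volumeIoiPow, lintegral_withDensity_eq_lintegral_mul _ (by fun_prop) (by fun_prop)]
  exact lintegral_subtype_comap measurableSet_Ioi (fun r => ENNReal.ofReal (r ^ n) * g r)

section PolarCoordinates

variable {E : Type*} [NormedAddCommGroup E] [NormedSpace ℝ E] [MeasurableSpace E] [BorelSpace E]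
  [FiniteDimensional ℝ E] [Nontrivial E] (μ : Measure E) [μ.IsAddHaarMeasure]

theorem lintegral_ofReal_mul_fun_norm (ℓ : E →L[ℝ] ℝ) {g : ℝ → ℝ≥0∞} (hg : Measurable g) :
    ∫⁻ x, ENNReal.ofReal (ℓ x) * g ‖x‖ ∂μ =
      (∫⁻ ω, ENNReal.ofReal (ℓ ω) ∂μ.toSphere) *
        ∫⁻ r in Ioi 0, ENNReal.ofReal (r ^ Module.finrank ℝ E) * g r := by
  set F : E → ℝ≥0∞ := fun x => ENNReal.ofReal (ℓ x) * g ‖x‖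
  have hpolar : ∫⁻ x, F x ∂μ = ∫⁻ z, F ((homeomorphUnitSphereProd E).symm z)
      ∂(μ.toSphere.prod (Measure.volumeIoiPow (Module.finrank ℝ E - 1))) := by
    rw [← (μ.measurePreserving_homeomorphUnitSphereProd).lintegral_comp_emb
      (Homeomorph.measurableEmbedding _), ← restrict_compl_singleton (μ := μ) 0,
      ← lintegral_subtype_comap (measurableSet_singleton _).compl]
    simp
  have hF : ∀ z : sphere (0 : E) 1 × Ioi (0 : ℝ), F ((homeomorphUnitSphereProd E).symm z) =
      ENNReal.ofReal (ℓ z.1) * (ENNReal.ofReal z.2 * g z.2) := by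
    rintro ⟨ω, r, hr⟩
    simp only [F, homeomorphUnitSphereProd_symm_apply_coe, map_smul, smul_eq_mul, norm_smul,
      norm_eq_abs, abs_of_pos (mem_Ioi.1 hr), norm_eq_of_mem_sphere, mul_one,
      ENNReal.ofReal_mul hr.le]
    ring
  have hdim : Module.finrank ℝ E - 1 + 1 = Module.finrank ℝ E :=
    Nat.sub_add_cancel Module.finrank_pos
  simp_rw [hpolar, hF]
  rw [lintegral_prod_mul (f := fun ω : sphere (0 : E) 1 => ENNReal.ofReal (ℓ ω))
    (g := fun r : Ioi (0 : ℝ) => ENNReal.ofReal r * g r) (by fun_prop) (by fun_prop),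
    lintegral_volumeIoiPow _ (g := fun r => ENNReal.ofReal r * g r) (by fun_prop)]
  congr 1
  refine setLIntegral_congr_fun measurableSet_Ioi fun r hr => ?_
  rw [← mul_assoc, ← ENNReal.ofReal_mul (pow_nonneg (le_of_lt hr) _), ← pow_succ, hdim]

end PolarCoordinates

theorem integrableOn_Ioi_pow_mul_exp_neg_mul_pow (k : ℕ) {m : ℕ} (hm : 0 < m) {b : ℝ}
    (hb : 0 < b) : IntegrableOn (fun r : ℝ => r ^ k * exp (-b * r ^ m)) (Ioi 0) := by
  refine (integrableOn_rpow_mul_exp_neg_mul_rpow (s := k)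
    (by linarith [k.cast_nonneg (α := ℝ)]) (Nat.cast_pos.2 hm) hb).congr_fun (fun r _ => ?_)
    measurableSet_Ioi
  simp only [Real.rpow_natCast]

theorem integral_Ioi_pow_mul_exp_neg_mul_pow (k : ℕ) {m : ℕ} (hm : 0 < m) {b : ℝ} (hb : 0 < b) :
    ∫ r in Ioi 0, r ^ k * exp (-b * r ^ m) =
      b ^ (-(k + 1) / m : ℝ) * (1 / m) * Gamma ((k + 1) / m) := by
  rw [← integral_rpow_mul_exp_neg_mul_rpow (Nat.cast_pos.2 hm)
    (by linarith [k.cast_nonneg (α := ℝ)]) hb]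
  simp only [Real.rpow_natCast]

theorem lintegral_Ioi_pow_mul_exp_neg_mul_pow (k : ℕ) {m : ℕ} (hm : 0 < m) {b : ℝ} (hb : 0 < b) :
    ∫⁻ r in Ioi 0, ENNReal.ofReal (r ^ k) * ENNReal.ofReal (exp (-b * r ^ m)) =
      ENNReal.ofReal (b ^ (-(k + 1) / m : ℝ) * (1 / m) * Gamma ((k + 1) / m)) := by
  rw [← integral_Ioi_pow_mul_exp_neg_mul_pow k hm hb, ofReal_integral_eq_lintegral_ofReal
    (integrableOn_Ioi_pow_mul_exp_neg_mul_pow k hm hb)]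
  · refine setLIntegral_congr_fun measurableSet_Ioi fun r hr => ?_
    rw [ENNReal.ofReal_mul (pow_nonneg (le_of_lt hr) _)]
  · filter_upwards [ae_restrict_mem measurableSet_Ioi] with r hr
    exact mul_nonneg (pow_nonneg (le_of_lt hr) _) (exp_pos _).le

theorem ofReal_coord_zero_mul_exp_neg_norm_sq (p : EuclideanSpace ℝ (Fin 3)) :
    ENNReal.ofReal (p 0) * ENNReal.ofReal (exp (-‖p‖ ^ 2)) =
      ENNReal.ofReal ((Ioi 0).indicator (fun t => t * exp (-t ^ 2)) (p 0) *
        exp (-p 1 ^ 2) * exp (-p 2 ^ 2)) := by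
  have hnorm : -‖p‖ ^ 2 = -p 0 ^ 2 + -p 1 ^ 2 + -p 2 ^ 2 := by
    simp only [EuclideanSpace.norm_sq_eq, Fin.sum_univ_three, Real.norm_eq_abs, sq_abs]
    ring
  rw [hnorm, exp_add, exp_add]
  by_cases hp : 0 < p 0
  · rw [indicator_of_mem (mem_Ioi.2 hp), ← ENNReal.ofReal_mul hp.le]
    ring_nf
  · rw [indicator_of_notMem (notMem_Ioi.2 (not_lt.1 hp)), ENNReal.ofReal_of_nonpos (not_lt.1 hp)]
    simp

theorem lintegral_ofReal_coord_zero_mul_exp_neg_norm_sq :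
    ∫⁻ p : EuclideanSpace ℝ (Fin 3), ENNReal.ofReal (p 0) * ENNReal.ofReal (exp (-‖p‖ ^ 2)) =
      ENNReal.ofReal (π / 2) := by
  set ψ : ℝ → ℝ := (Ioi 0).indicator fun t => t * exp (-t ^ 2)
  set γ : ℝ → ℝ := fun t => exp (-t ^ 2)
  set f : Fin 3 → ℝ → ℝ := ![ψ, γ, γ]
  have hf_nonneg : ∀ i t, 0 ≤ f i t := by
    intro i t
    fin_cases i
    · exact indicator_nonneg (fun t ht => mul_nonneg (le_of_lt ht) (exp_pos _).le) t
    all_goals exact (exp_pos _).le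
  have hf_int : ∀ i, Integrable (f i) := by
    intro i
    fin_cases i
    · simpa [f, ψ] using (integrableOn_Ioi_pow_mul_exp_neg_mul_pow 1 two_pos one_pos
        ).integrable_indicator measurableSet_Ioi
    all_goals exact (by simpa using integrable_exp_neg_mul_sq one_pos : Integrable γ)
  have hψ : ∫ t, ψ t = 1 / 2 := by
    simpa [ψ, integral_indicator measurableSet_Ioi, Real.Gamma_one] using
      integral_Ioi_pow_mul_exp_neg_mul_pow 1 two_pos one_pos
  have hγ : ∫ t, γ t = √π := by simpa [γ] using integral_gaussian 1
  calc ∫⁻ p : EuclideanSpace ℝ (Fin 3), ENNReal.ofReal (p 0) * ENNReal.ofReal (exp (-‖p‖ ^ 2))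
      = ∫⁻ x : Fin 3 → ℝ, ENNReal.ofReal (∏ i, f i (x i)) := by
        have hprod : ∀ p : EuclideanSpace ℝ (Fin 3), ENNReal.ofReal (p 0) *
            ENNReal.ofReal (exp (-‖p‖ ^ 2)) = ENNReal.ofReal (∏ i, f i (p i)) := fun p => by
          rw [Fin.prod_univ_three]
          exact ofReal_coord_zero_mul_exp_neg_norm_sq p
        simp_rw [hprod]
        exact (EuclideanSpace.volume_preserving_symm_measurableEquiv_toLp (Fin 3)
          ).lintegral_comp_emb (MeasurableEquiv.measurableEmbedding _)
          (fun x => ENNReal.ofReal (∏ i, f i (x i)))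
    _ = ENNReal.ofReal (∏ i, ∫ t, f i t) := by
        rw [← integral_fintype_prod_volume_eq_prod]
        exact (ofReal_integral_eq_lintegral_ofReal (Integrable.fintype_prod hf_int)
          (ae_of_all _ fun x => Finset.prod_nonneg fun i _ => hf_nonneg i (x i))).symm
    _ = ENNReal.ofReal (π / 2) := by
        rw [Fin.prod_univ_three]
        change ENNReal.ofReal ((∫ t, ψ t) * (∫ t, γ t) * ∫ t, γ t) = _
        rw [hψ, hγ, mul_assoc, Real.mul_self_sqrt pi_pos.le]
        ring_nf

theorem lintegral_toSphere_coord_zero :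
    ∫⁻ ω, ENNReal.ofReal (ω.1 0) ∂(volume : Measure (EuclideanSpace ℝ (Fin 3))).toSphere =
      ENNReal.ofReal π := by
  have h := lintegral_ofReal_mul_fun_norm volume (EuclideanSpace.proj (0 : Fin 3))
    (g := fun r => ENNReal.ofReal (exp (-r ^ 2))) (by fun_prop)
  have hr := lintegral_Ioi_pow_mul_exp_neg_mul_pow 3 two_pos one_pos
  norm_num [Real.Gamma_two] at hr
  simp only [EuclideanSpace.coe_proj, finrank_euclideanSpace_fin,
    lintegral_ofReal_coord_zero_mul_exp_neg_norm_sq, hr] at h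
  rw [← ENNReal.mul_left_inj (c := ENNReal.ofReal (1 / 2)) (by norm_num) ENNReal.ofReal_ne_top,
    ← h, ← ENNReal.ofReal_mul pi_pos.le]
  ring_nf

theorem lintegral_ofReal_coord_zero_mul_fun_norm {g : ℝ → ℝ≥0∞} (hg : Measurable g) :
    ∫⁻ p : EuclideanSpace ℝ (Fin 3), ENNReal.ofReal (p 0) * g ‖p‖ =
      ENNReal.ofReal π * ∫⁻ r in Ioi 0, ENNReal.ofReal (r ^ 3) * g r := by
  have h := lintegral_ofReal_mul_fun_norm volume (EuclideanSpace.proj (0 : Fin 3)) hg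
  simp only [EuclideanSpace.coe_proj, finrank_euclideanSpace_fin] at h
  rwa [lintegral_toSphere_coord_zero] at h

theorem ofReal_inv_exp_sub_one {x : ℝ} (hx : 0 < x) :
    ENNReal.ofReal ((exp x - 1)⁻¹) = ∑' n : ℕ, ENNReal.ofReal (exp (-((n + 1) * x))) := by
  have hs := (hasSum_geometric_of_lt_one (exp_pos (-x)).le
    (Real.exp_lt_one_iff.2 (neg_neg_of_pos hx))).mul_right (exp (-x))
  have hterm : ∀ n : ℕ, exp (-x) ^ n * exp (-x) = exp (-((n + 1) * x)) := by
    intro n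
    rw [← exp_nat_mul, ← exp_add]
    ring_nf
  have hval : (1 - exp (-x))⁻¹ * exp (-x) = (exp x - 1)⁻¹ := by
    have : exp x - 1 ≠ 0 := (sub_pos.2 (one_lt_exp_iff.2 hx)).ne'
    rw [exp_neg]
    field_simp
  simp only [hterm, hval] at hs
  rw [← ENNReal.ofReal_tsum_of_nonneg (fun n => (exp_pos _).le) hs.summable, hs.tsum_eq]

theorem lintegral_Ioi_pow_mul_inv_exp_sub_one (k : ℕ) {β : ℝ} (hβ : 0 < β) :
    ∫⁻ u in Ioi 0, ENNReal.ofReal (u ^ k) * ENNReal.ofReal ((exp (β * u) - 1)⁻¹) =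
      ENNReal.ofReal (k ! / β ^ (k + 1)) *
        ∑' n : ℕ, ENNReal.ofReal (1 / ((n : ℝ) + 1) ^ (k + 1)) := by
  have hterm : ∀ n : ℕ,
      ∫⁻ u in Ioi 0, ENNReal.ofReal (u ^ k) * ENNReal.ofReal (exp (-((n + 1) * β) * u)) =
        ENNReal.ofReal (k ! / β ^ (k + 1)) * ENNReal.ofReal (1 / ((n : ℝ) + 1) ^ (k + 1)) := by
    intro n
    have hb : 0 < ((n : ℝ) + 1) * β := by positivity
    have h := lintegral_Ioi_pow_mul_exp_neg_mul_pow k one_pos hb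
    simp only [pow_one, Nat.cast_one, div_one, Real.Gamma_nat_eq_factorial, mul_one] at h
    rw [← ENNReal.ofReal_mul (by positivity), h, show -((k : ℝ) + 1) = -((k + 1 : ℕ) : ℝ) by
      push_cast; ring, Real.rpow_neg hb.le, Real.rpow_natCast, mul_pow]
    field_simp
  calc ∫⁻ u in Ioi 0, ENNReal.ofReal (u ^ k) * ENNReal.ofReal ((exp (β * u) - 1)⁻¹)
      = ∫⁻ u in Ioi 0, ∑' n : ℕ,
          ENNReal.ofReal (u ^ k) * ENNReal.ofReal (exp (-((n + 1) * β) * u)) :=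
        setLIntegral_congr_fun measurableSet_Ioi fun u hu => by
          rw [ofReal_inv_exp_sub_one (mul_pos hβ hu), ← ENNReal.tsum_mul_left]
          simp only [← mul_assoc, neg_mul]
    _ = ∑' n : ℕ,
          ENNReal.ofReal (k ! / β ^ (k + 1)) * ENNReal.ofReal (1 / ((n : ℝ) + 1) ^ (k + 1)) := by
        rw [lintegral_tsum fun n => by fun_prop]
        simp_rw [hterm]
    _ = _ := ENNReal.tsum_mul_left

theorem lintegral_Ioi_pow_three_mul_inv_exp_sub_one {β : ℝ} (hβ : 0 < β) :
    ∫⁻ u in Ioi 0, ENNReal.ofReal (u ^ 3) * ENNReal.ofReal ((exp (β * u) - 1)⁻¹) =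
      ENNReal.ofReal (π ^ 4 / (15 * β ^ 4)) := by
  have hζ : HasSum (fun n : ℕ => 1 / ((n : ℝ) + 1) ^ 4) (π ^ 4 / 90) := by
    simpa using (hasSum_nat_add_iff' 1).2 hasSum_zeta_four
  rw [lintegral_Ioi_pow_mul_inv_exp_sub_one 3 hβ, ← ENNReal.ofReal_tsum_of_nonneg
    (fun n => by positivity) hζ.summable, hζ.tsum_eq, ← ENNReal.ofReal_mul (by positivity)]
  congr 1
  simp only [Nat.factorial, Nat.succ_eq_add_one, Nat.reduceAdd, zero_add, mul_one, Nat.reduceMul,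
    Nat.cast_ofNat]
  field_simp
  ring

theorem integrable_and_integral_eq_of_lintegral_ofReal_eq {α : Type*} [MeasurableSpace α]
    {μ : Measure α} {f : α → ℝ} (hf : AEStronglyMeasurable f μ) (hf_nonneg : 0 ≤ᵐ[μ] f)
    {c : ℝ} (hc : 0 ≤ c) (h : ∫⁻ x, ENNReal.ofReal (f x) ∂μ = ENNReal.ofReal c) :
    Integrable f μ ∧ ∫ x, f x ∂μ = c := by
  refine ⟨⟨hf, (hasFiniteIntegral_iff_ofReal hf_nonneg).2 (h ▸ ENNReal.ofReal_lt_top)⟩, ?_⟩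
  rw [integral_eq_lintegral_of_nonneg_ae hf_nonneg hf, h, ENNReal.toReal_ofReal hc]

theorem setLIntegral_halfSpace_coord_zero_mul_inv_exp_sub_one {β : ℝ} (hβ : 0 < β) :
    ∫⁻ p in {p : EuclideanSpace ℝ (Fin 3) | 0 < p 0},
        ENNReal.ofReal (p 0 * (exp (β * ‖p‖) - 1)⁻¹) =
      ENNReal.ofReal (π ^ 5 / (15 * β ^ 4)) := by
  have hS : MeasurableSet {p : EuclideanSpace ℝ (Fin 3) | 0 < p 0} :=
    measurableSet_lt measurable_const (EuclideanSpace.proj (0 : Fin 3)).continuous.measurable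
  have hind : ∀ p : EuclideanSpace ℝ (Fin 3),
      {p : EuclideanSpace ℝ (Fin 3) | 0 < p 0}.indicator
          (fun p => ENNReal.ofReal (p 0 * (exp (β * ‖p‖) - 1)⁻¹)) p =
        ENNReal.ofReal (p 0) * ENNReal.ofReal ((exp (β * ‖p‖) - 1)⁻¹) := by
    intro p
    -- `ENNReal.ofReal` vanishes where `p 0 ≤ 0`, which absorbs the restriction to the half-space
    by_cases hp : 0 < p 0
    · rw [indicator_of_mem (show p ∈ {p : EuclideanSpace ℝ (Fin 3) | 0 < p 0} from hp),
        ENNReal.ofReal_mul hp.le]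
    · rw [indicator_of_notMem (show p ∉ {p : EuclideanSpace ℝ (Fin 3) | 0 < p 0} from hp),
        ENNReal.ofReal_of_nonpos (not_lt.1 hp), zero_mul]
  rw [← lintegral_indicator hS, funext hind,
    lintegral_ofReal_coord_zero_mul_fun_norm (g := fun r => ENNReal.ofReal ((exp (β * r) - 1)⁻¹))
      (by fun_prop), lintegral_Ioi_pow_three_mul_inv_exp_sub_one hβ,
    ← ENNReal.ofReal_mul pi_pos.le]
  ring_nf

/-- The expected energy current density of the NESS: for `β_L, β_R > 0`,
the function `p ↦ p₁·(1/(e^{β_R‖p‖} − 1) − 1/(e^{β_L‖p‖} − 1))` is integrable on the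
half-space `{p₁ > 0}` and
`(2π)^{-3} ∫_{p₁>0} p₁·(1/(e^{β_R‖p‖} − 1) − 1/(e^{β_L‖p‖} − 1)) dp
  = (π²/120)(1/β_R⁴ − 1/β_L⁴)`. -/
theorem stmt18 (βL βR : ℝ) (hL : 0 < βL) (hR : 0 < βR) :
    IntegrableOn (fun p : EuclideanSpace ℝ (Fin 3) =>
      p 0 * (1 / (Real.exp (βR * ‖p‖) - 1) - 1 / (Real.exp (βL * ‖p‖) - 1)))
      {p : EuclideanSpace ℝ (Fin 3) | 0 < p 0} ∧
    ((2 * π) ^ 3)⁻¹ * ∫ p in {p : EuclideanSpace ℝ (Fin 3) | 0 < p 0},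
        p 0 * (1 / (Real.exp (βR * ‖p‖) - 1) - 1 / (Real.exp (βL * ‖p‖) - 1))
      = (π ^ 2 / 120) * (1 / βR ^ 4 - 1 / βL ^ 4) := by
  set S : Set (EuclideanSpace ℝ (Fin 3)) := {p | 0 < p 0}
  set F : ℝ → EuclideanSpace ℝ (Fin 3) → ℝ := fun β p => p 0 * (exp (β * ‖p‖) - 1)⁻¹
  have hF : ∀ β, 0 < β → IntegrableOn (F β) S ∧ ∫ p in S, F β p = π ^ 5 / (15 * β ^ 4) := by
    intro β hβ
    refine integrable_and_integral_eq_of_lintegral_ofReal_eq (by fun_prop) ?_ (by positivity)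
      (setLIntegral_halfSpace_coord_zero_mul_inv_exp_sub_one hβ)
    filter_upwards [ae_restrict_mem (measurableSet_lt measurable_const (by fun_prop))] with p hp
    exact mul_nonneg (le_of_lt hp) (inv_nonneg.2 (sub_nonneg.2 (one_le_exp (by positivity))))
  have hsplit : (fun p : EuclideanSpace ℝ (Fin 3) =>
      p 0 * (1 / (exp (βR * ‖p‖) - 1) - 1 / (exp (βL * ‖p‖) - 1))) =
        fun p => F βR p - F βL p := by
    ext p
    simp only [F, one_div]
    ring
  obtain ⟨hintR, hvalR⟩ := hF βR hR
  obtain ⟨hintL, hvalL⟩ := hF βL hL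
  rw [hsplit, integral_sub hintR hintL, hvalR, hvalL]
  refine ⟨hintR.sub hintL, ?_⟩
  field_simp
  ring
end

section
/- Let β_L, β_R > 0 with β_L ≠ β_R. Set 𝒯₀₀ := (π²/60)(β_L^{−4} + β_R^{−4}), 𝒯₀₁ := (π²/120)(β_R^{−4} − β_L^{−4}), 𝒯₁₁ := 𝒯₀₀/3, κ := (4/3)·(β_R⁴ + β_L⁴)/(β_R⁴ − β_L⁴), and v_N := κ − sgn(β_R − β_L)·√(κ² − 1). Then: (i) 0 < |v_N| < (4 − √7)/3 (in particular |v_N| < 1); (ii) with γ := 1/√(1 − v_N²), the off-diagonal entry of the matrix Λ⁻¹·T̃·Λ⁻¹ vanishes, i.e. γ²·(𝒯₀₁·(1 + v_N²) + (𝒯₀₀ + 𝒯₁₁)·v_N) = 0, where T̃ = [[𝒯₀₀, 𝒯₀₁],[𝒯₀₁, 𝒯₁₁]] and Λ⁻¹ = [[γ, γ v_N],[γ v_N, γ]]; (iii) the (1,1)-entry of Λ⁻¹·T̃·Λ⁻¹, namely γ²·(𝒯₁₁ + 2𝒯₀₁ v_N + 𝒯₀₀ v_N²), is not equal to 𝒯₁₁.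 -/
open Real

private lemma aux_sqrt7_lt : Real.sqrt 7 < 4 := by
  nlinarith [Real.sq_sqrt (show (0:ℝ) ≤ 7 by norm_num), Real.sqrt_nonneg 7]

private lemma aux_sqrt7_gt : 1 < Real.sqrt 7 := by
  nlinarith [Real.sq_sqrt (show (0:ℝ) ≤ 7 by norm_num), Real.sqrt_nonneg 7]

private lemma aux_upos (a b κ : ℝ) (ha : 0 < a) (hlt : a < b)
    (h : κ * (b - a) = 4 / 3 * (b + a)) : 4 / 3 < κ := by nlinarith

private lemma aux_uneg (a b κ : ℝ) (hb : 0 < b) (hlt : b < a)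
    (h : κ * (b - a) = 4 / 3 * (b + a)) : 4 / 3 < -κ := by nlinarith

private lemma aux_one_lt_sq (u : ℝ) (h : 4 / 3 < u) : 1 < u ^ 2 := by nlinarith

private lemma aux_tu (u t : ℝ) (hu : 4 / 3 < u) (ht0 : 0 ≤ t) (ht2 : t ^ 2 = u ^ 2 - 1) :
    t < u := by nlinarith

private lemma aux_main (u t w : ℝ) (hu : 4 / 3 < u) (ht0 : 0 ≤ t) (htu : t < u)
    (ht2 : t ^ 2 = u ^ 2 - 1) (hw0 : 0 ≤ w) (hw2 : w ^ 2 = 7) (hw4 : w < 4) :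
    u - t < (4 - w) / 3 := by
  nlinarith [mul_pos (show (0:ℝ) < 3 * u - 4 by linarith)
    (show (0:ℝ) < (3 * u + 4) - (3 * t + w) by linarith)]

private lemma aux_sq_lt_one (x : ℝ) (h : |x| < 1) : x ^ 2 < 1 := by
  nlinarith [sq_abs x, abs_nonneg x]

private lemma aux_kv (u t : ℝ) (htpos : 0 < t) (htu : t < u) (ht2 : t ^ 2 = u ^ 2 - 1) :
    0 < 1 - (u ^ 2 - u * t) := by
  nlinarith [mul_pos htpos (sub_pos.mpr htu)]

/-- The comoving frame of the NESS: with the components `𝒯₀₀`, `𝒯₀₁`,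
`𝒯₁₁ = 𝒯₀₀/3` of the expected stress-energy tensor, `κ = (4/3)(β_R⁴+β_L⁴)/(β_R⁴−β_L⁴)`
and `v_N = κ − sgn(β_R − β_L)·√(κ² − 1)`, one has (i) `0 < |v_N| < (4−√7)/3 < 1`;
(ii) the off-diagonal entry of `Λ⁻¹·T̃·Λ⁻¹` vanishes:
`γ²(𝒯₀₁(1+v_N²) + (𝒯₀₀+𝒯₁₁)v_N) = 0` with `γ = 1/√(1−v_N²)`;
(iii) the (1,1)-entry `γ²(𝒯₁₁ + 2𝒯₀₁v_N + 𝒯₀₀v_N²)` differs from `𝒯₁₁`. -/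
theorem stmt19 (βL βR T00 T01 T11 κ vN : ℝ) (hL : 0 < βL) (hR : 0 < βR) (hne : βL ≠ βR)
    (hT00 : T00 = (π ^ 2 / 60) * (1 / βL ^ 4 + 1 / βR ^ 4))
    (hT01 : T01 = (π ^ 2 / 120) * (1 / βR ^ 4 - 1 / βL ^ 4))
    (hT11 : T11 = T00 / 3)
    (hκ : κ = (4 / 3) * ((βR ^ 4 + βL ^ 4) / (βR ^ 4 - βL ^ 4)))
    (hv : vN = κ - Real.sign (βR - βL) * Real.sqrt (κ ^ 2 - 1)) :
    (0 < |vN| ∧ |vN| < (4 - Real.sqrt 7) / 3 ∧ |vN| < 1) ∧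
    (1 / Real.sqrt (1 - vN ^ 2)) ^ 2 * (T01 * (1 + vN ^ 2) + (T00 + T11) * vN) = 0 ∧
    (1 / Real.sqrt (1 - vN ^ 2)) ^ 2 * (T11 + 2 * T01 * vN + T00 * vN ^ 2) ≠ T11 := by
  have ha : (0:ℝ) < βL ^ 4 := by positivity
  have hb : (0:ℝ) < βR ^ 4 := by positivity
  set a := βL ^ 4 with hadef
  set b := βR ^ 4 with hbdef
  have hab : a ≠ b := by
    rcases lt_trichotomy βL βR with h | h | h
    · exact ne_of_lt (pow_lt_pow_left₀ h hL.le (by norm_num))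
    · exact absurd h hne
    · exact ne_of_gt (pow_lt_pow_left₀ h hR.le (by norm_num))
  have hba : b - a ≠ 0 := sub_ne_zero.mpr (Ne.symm hab)
  have hκ' : κ * (b - a) = 4 / 3 * (b + a) := by
    rw [hκ]; field_simp
  set s := Real.sign (βR - βL) with hsdef
  have hscase : (s = 1 ∧ a < b) ∨ (s = -1 ∧ b < a) := by
    rcases lt_trichotomy βL βR with h | h | h
    · exact Or.inl ⟨Real.sign_of_pos (by linarith), pow_lt_pow_left₀ h hL.le (by norm_num)⟩
    · exact absurd h hne
    · exact Or.inr ⟨Real.sign_of_neg (by linarith), pow_lt_pow_left₀ h hR.le (by norm_num)⟩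
  have hs2 : s ^ 2 = 1 := by rcases hscase with ⟨h, _⟩ | ⟨h, _⟩ <;> rw [h] <;> norm_num
  have hu43 : 4 / 3 < s * κ := by
    rcases hscase with ⟨h, hlt⟩ | ⟨h, hlt⟩
    · rw [h, one_mul]; exact aux_upos a b κ ha hlt hκ'
    · rw [h]
      have := aux_uneg a b κ hb hlt hκ'
      linarith
  set u := s * κ with hudef
  have hκ2 : κ ^ 2 = u ^ 2 := by rw [hudef]; linear_combination (-(κ ^ 2)) * hs2
  have hu2 : 1 < u ^ 2 := aux_one_lt_sq u hu43
  have hκ1 : (1:ℝ) < κ ^ 2 := by rw [hκ2]; exact hu2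
  set t := Real.sqrt (κ ^ 2 - 1) with htdef
  have ht2 : t ^ 2 = κ ^ 2 - 1 := Real.sq_sqrt (by linarith)
  have ht2u : t ^ 2 = u ^ 2 - 1 := by rw [ht2, hκ2]
  have ht0 : 0 ≤ t := Real.sqrt_nonneg _
  have htpos : 0 < t := Real.sqrt_pos.mpr (by linarith)
  have htu : t < u := aux_tu u t hu43 ht0 ht2u
  have hsv : s * vN = u - t := by
    rw [hv, hudef]; linear_combination (-t) * hs2
  have habs : |vN| = u - t := by
    rcases hscase with ⟨h, _⟩ | ⟨h, _⟩
    · rw [h, one_mul] at hsv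
      have hvpos : 0 < vN := by rw [hsv]; linarith
      rw [abs_of_pos hvpos]; exact hsv
    · rw [h] at hsv
      have hvneg : vN < 0 := by linarith
      rw [abs_of_neg hvneg]; linarith
  have hw2 : Real.sqrt 7 ^ 2 = 7 := Real.sq_sqrt (by norm_num)
  have hw0 : 0 ≤ Real.sqrt 7 := Real.sqrt_nonneg _
  have habs_lt : |vN| < (4 - Real.sqrt 7) / 3 := by
    rw [habs]
    exact aux_main u t (Real.sqrt 7) hu43 ht0 htu ht2u hw0 hw2 aux_sqrt7_lt
  have habs_pos : 0 < |vN| := by rw [habs]; linarith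
  have habs1 : |vN| < 1 := habs_lt.trans (by linarith [aux_sqrt7_gt])
  have hrel : 2 * T00 + 3 * κ * T01 = 0 := by
    rw [hT00, hT01, hκ]
    field_simp
    ring
  have hquad : vN ^ 2 - 2 * κ * vN + 1 = 0 := by
    rw [hv]
    linear_combination t ^ 2 * hs2 + ht2
  have hinner : T01 * (1 + vN ^ 2) + (T00 + T11) * vN = 0 := by
    linear_combination vN * hT11 + (2 * vN / 3) * hrel + T01 * hquad
  have hv2 : vN ^ 2 < 1 := aux_sq_lt_one vN habs1
  have hpos1 : 0 < 1 - vN ^ 2 := by linarith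
  have hγ : (1 / Real.sqrt (1 - vN ^ 2)) ^ 2 = 1 / (1 - vN ^ 2) := by
    rw [div_pow, one_pow, Real.sq_sqrt hpos1.le]
  have hκv : κ * vN = u ^ 2 - u * t := by
    rw [hv, hudef]; linear_combination (-(κ ^ 2)) * hs2
  have h1κv : 0 < 1 - κ * vN := by
    rw [hκv]; exact aux_kv u t htpos htu ht2u
  have hvne : vN ≠ 0 := by
    intro h; rw [h, abs_zero] at habs_pos; exact lt_irrefl 0 habs_pos
  have hT01ne : T01 ≠ 0 := by
    rw [hT01]
    refine mul_ne_zero (by positivity) ?_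
    rw [sub_ne_zero]
    intro h
    apply hab
    field_simp at h
    linarith
  refine ⟨⟨habs_pos, habs_lt, habs1⟩, ?_, ?_⟩
  · rw [hinner, mul_zero]
  · intro heq
    rw [hγ, one_div_mul_eq_div, div_eq_iff hpos1.ne'] at heq
    have key : 2 * T01 * vN * (1 - κ * vN) = 0 := by
      linear_combination heq - (2 / 3) * vN ^ 2 * hrel - vN ^ 2 * hT11
    exact mul_ne_zero (mul_ne_zero (mul_ne_zero two_ne_zero hT01ne) hvne) h1κv.ne' key
end
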